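/- A K-linear map X : T → T of degree 2 (i.e. X restricts to X^A : A → Q and vanishes on P and Q) is a derivation of the triole algebra T if and only if X^A is a Q-valued K-linear derivation of A, i.e. X^A(ab) = a·X^A(b) + b·X^A(a) for all a,b ∈ A. Consequently the space D(T)₂ of degree-2 derivations of T is isomorphic as an A-module to Der_K(A,Q), the module of Q-valued derivations of A. -/

import Mathlib

/-!
A degree-2 map `deg2Map XA` vanishes on `P ⊕ Q` and takes values in `Q`, and every product in `T`
with a factor in `Q` lies in `Q` and only involves the `A`-component of the other factor. Hence
all graded Leibniz identities hold trivially except the one for a product `a · b` in `A`, whose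
`Q`-component is exactly the derivation rule for `XA`. Conversely, a degree-2 map is determined
by its component `A → Q`.
-/

variable {K A P Q : Type*}
variable [Field K] [CharZero K] [CommRing A] [Algebra K A]
variable [AddCommGroup P] [Module A P] [AddCommGroup Q] [Module A Q]
variable [Module K P] [Module K Q] [IsScalarTower K A P] [IsScalarTower K A Q]

/-- Multiplication of the triole algebra `T = A ⊕ P ⊕ Q` determined by the
`A`-bilinear form `g : P × P → Q`. -/
def trioleMul (g : P →ₗ[A] P →ₗ[A] Q) (x y : A × P × Q) : A × P × Q :=
  (x.1 * y.1,
    x.1 • y.2.1 + y.1 • x.2.1,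
    x.1 • y.2.2 + y.1 • x.2.2 + g x.2.1 y.2.1)

/-- `X : T → T` is a derivation of degree `k` of the triole algebra: the graded
Leibniz rule `X (s t) = X s · t + (-1)^(k·i) s · X t` holds for all homogeneous
`s ∈ Tᵢ` (for `i = 0, 1, 2`; the homogeneous components of all other degrees are zero,
where the Leibniz rule holds trivially) and all `t ∈ T`. -/
def IsTrioleDeriv (g : P →ₗ[A] P →ₗ[A] Q) (k : ℤ)
    (X : (A × P × Q) →ₗ[K] (A × P × Q)) : Prop :=
  (∀ (a : A) (t : A × P × Q),
    X (trioleMul g (a, 0, 0) t)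
      = trioleMul g (X (a, 0, 0)) t + trioleMul g (a, 0, 0) (X t)) ∧
  (∀ (p : P) (t : A × P × Q),
    X (trioleMul g (0, p, 0) t)
      = trioleMul g (X (0, p, 0)) t + ((-1 : K) ^ k) • trioleMul g (0, p, 0) (X t)) ∧
  (∀ (q : Q) (t : A × P × Q),
    X (trioleMul g (0, 0, q) t)
      = trioleMul g (X (0, 0, q)) t + trioleMul g (0, 0, q) (X t))


/-- The degree-2 `K`-linear map `T → T` with the single component `X^A : A → Q`. -/
def deg2Map (XA : A →ₗ[K] Q) : (A × P × Q) →ₗ[K] (A × P × Q) :=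
  LinearMap.prod 0 (LinearMap.prod 0 (XA ∘ₗ LinearMap.fst K A (P × Q)))

/-- `X` has degree `2`: it shifts the homogeneous components of `T = A ⊕ P ⊕ Q` by two. -/
def IsDegTwoMap (X : (A × P × Q) →ₗ[K] (A × P × Q)) : Prop :=
  (∀ a : A, (X (a, 0, 0)).1 = 0 ∧ (X (a, 0, 0)).2.1 = 0) ∧
  (∀ p : P, X (0, p, 0) = 0) ∧
  (∀ q : Q, X (0, 0, q) = 0)

omit [CharZero K] [Module A P] [Module A Q] [IsScalarTower K A P] [IsScalarTower K A Q] in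
@[simp]
theorem deg2Map_apply (XA : A →ₗ[K] Q) (x : A × P × Q) : deg2Map XA x = (0, 0, XA x.1) := by
  simp [deg2Map]

omit [CharZero K] [Module A P] [Module A Q] [IsScalarTower K A P] [IsScalarTower K A Q] in
theorem deg2Map_injective : Function.Injective (deg2Map (K := K) (A := A) (P := P) (Q := Q)) :=
  fun XA XA' h => LinearMap.ext fun a => by
    simpa using congrArg (fun X => (X (a, 0, 0)).2.2) h

omit [CharZero K] [IsScalarTower K A P] [IsScalarTower K A Q] in
theorem isTrioleDeriv_deg2Map_iff (g : P →ₗ[A] P →ₗ[A] Q) (k : ℤ) (XA : A →ₗ[K] Q) :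
    IsTrioleDeriv g k (deg2Map XA) ↔ ∀ a b : A, XA (a * b) = a • XA b + b • XA a := by
  refine ⟨fun h a b => ?_, fun h => ⟨fun a t => ?_, fun _ _ => ?_, fun _ _ => ?_⟩⟩
  · simpa [trioleMul, add_comm] using congrArg (fun z => z.2.2) (h.1 a (b, 0, 0))
  · simp [trioleMul, h a t.1, add_comm]
  all_goals simp [trioleMul]

/-- The component `X^A : A → Q` of a `K`-linear map `X : T → T`. -/
def aqComponent (X : (A × P × Q) →ₗ[K] (A × P × Q)) : A →ₗ[K] Q :=
  LinearMap.snd K P Q ∘ₗ LinearMap.snd K A (P × Q) ∘ₗ X ∘ₗ LinearMap.inl K A (P × Q)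

omit [CharZero K] [Module A P] [Module A Q] [IsScalarTower K A P] [IsScalarTower K A Q] in
theorem IsDegTwoMap.eq_deg2Map {X : (A × P × Q) →ₗ[K] (A × P × Q)} (hX : IsDegTwoMap X) :
    X = deg2Map (aqComponent X) := by
  obtain ⟨hA, hP, hQ⟩ := hX
  refine LinearMap.ext fun t => ?_
  have hsplit : X t = X (t.1, 0, 0) + X (0, t.2.1, 0) + X (0, 0, t.2.2) := by
    rw [← map_add, ← map_add]
    simp
  rw [hsplit, hP, hQ, add_zero, add_zero, deg2Map_apply]
  exact Prod.ext (hA t.1).1 (Prod.ext (hA t.1).2 rfl)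

/-- a degree-2 map is a derivation of the triole algebra iff its component
`X^A : A → Q` is a `Q`-valued derivation of `A`; consequently `D(T)₂ ≅ Der_K(A,Q)`. -/
theorem degree_two_triole_derivations (g : P →ₗ[A] P →ₗ[A] Q) :
    (∀ XA : A →ₗ[K] Q,
      IsTrioleDeriv g 2 (deg2Map XA) ↔
        (∀ a b : A, XA (a * b) = a • XA b + b • XA a)) ∧
    -- the correspondence `XA ↦ deg2Map XA` is injective
    (∀ XA XA' : A →ₗ[K] Q, deg2Map (P := P) XA = deg2Map XA' → XA = XA') ∧
    -- and every degree-2 derivation of `T` arises this way: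
    (∀ X : (A × P × Q) →ₗ[K] (A × P × Q), IsDegTwoMap X → IsTrioleDeriv g 2 X →
      ∃ XA : A →ₗ[K] Q, (∀ a b : A, XA (a * b) = a • XA b + b • XA a) ∧ X = deg2Map XA) := by
  refine ⟨isTrioleDeriv_deg2Map_iff g 2, fun _ _ h => deg2Map_injective h,
    fun X hX hD => ⟨aqComponent X, ?_, hX.eq_deg2Map⟩⟩
  rw [hX.eq_deg2Map] at hD
  exact (isTrioleDeriv_deg2Map_iff g 2 _).1 hD
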